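/- arXiv:1406.4615 — 6 statements merged into one kernel-verified Lean document; each statement's English description precedes it below -/
import Mathlib

section
/- (Feasibility of the OMG policy, deterministic form of Theorem 1, part 1.) Let λ ∈ (0,1], W ≥ 0, Smin ≤ Smax, Umin ≤ Umax, D̲ ≤ D̄ be real numbers satisfying the storage feasibility conditions λ·Smin + Umax ≥ Smin and λ·Smax + Umin ≤ Smax, and let Γ be a real number with κmin ≤ Γ ≤ κmax, where κmin := (−W·D̲ + Umax − Smax)/λ and κmax := (−W·D̄ − Smin + Umin)/λ. Let s, u : ℕ → ℝ be sequences with Smin ≤ s(1) ≤ Smax and, for every t ≥ 1: s(t+1) = λ·s(t) + u(t); Umin ≤ u(t) ≤ Umax; u(t) = Umin whenever λ·(s(t) + Γ) ≥ −W·D̲; and u(t) = Umax whenever λ·(s(t) + Γ) ≤ −W·D̄. Then Smin ≤ s(t) ≤ Smax for every t ≥ 1. -/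
/-- Feasibility of the OMG policy (deterministic form of Theorem 1, part 1). -/
theorem stmt_1 (lam W Smin Smax Umin Umax Dl Du Γ : ℝ)
    (hlam0 : 0 < lam) (hlam1 : lam ≤ 1) (hW : 0 ≤ W)
    (hS : Smin ≤ Smax) (hU : Umin ≤ Umax) (hD : Dl ≤ Du)
    (hfeas1 : lam * Smin + Umax ≥ Smin) (hfeas2 : lam * Smax + Umin ≤ Smax)
    (hΓ1 : (-W * Dl + Umax - Smax) / lam ≤ Γ)
    (hΓ2 : Γ ≤ (-W * Du - Smin + Umin) / lam)
    (s u : ℕ → ℝ)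
    (hinit : Smin ≤ s 1 ∧ s 1 ≤ Smax)
    (hdyn : ∀ t, 1 ≤ t → s (t + 1) = lam * s t + u t)
    (hubd : ∀ t, 1 ≤ t → Umin ≤ u t ∧ u t ≤ Umax)
    (hthr1 : ∀ t, 1 ≤ t → lam * (s t + Γ) ≥ -W * Dl → u t = Umin)
    (hthr2 : ∀ t, 1 ≤ t → lam * (s t + Γ) ≤ -W * Du → u t = Umax) :
    ∀ t, 1 ≤ t → Smin ≤ s t ∧ s t ≤ Smax := by
  have hΓ1' : -W * Dl + Umax - Smax ≤ lam * Γ := by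
    have := (div_le_iff₀ hlam0).mp hΓ1
    linarith [this]
  have hΓ2' : lam * Γ ≤ -W * Du - Smin + Umin := by
    have := (le_div_iff₀ hlam0).mp hΓ2
    linarith [this]
  intro t ht
  induction t, ht using Nat.le_induction with
  | base => exact hinit
  | succ n hn ih =>
    have hdynn := hdyn n hn
    have hubdn := hubd n hn
    constructor
    · by_cases h : lam * (s n + Γ) ≤ -W * Du
      · have hu := hthr2 n hn h
        rw [hdynn, hu]
        nlinarith [ih.1]
      · push_neg at h
        have h1 : lam * s n > Smin - Umin := by nlinarith
        rw [hdynn]; linarith [hubdn.1]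
    · by_cases h : lam * (s n + Γ) ≥ -W * Dl
      · have hu := hthr1 n hn h
        rw [hdynn, hu]
        nlinarith [ih.2]
      · push_neg at h
        have h1 : lam * s n < Smax - Umax := by nlinarith
        rw [hdynn]; linarith [hubdn.2]
end

section
/- (Single-step invariance, Case 1.) Let λ ∈ (0,1], W ≥ 0, D̲ ≤ D̄, Smin ≤ s ≤ Smax, suppose λ·Smax + Umin ≤ Smax, Γ ≤ κmax where κmax := (−W·D̄ − Smin + Umin)/λ, and suppose −W·D̲ ≤ λ·(s + Γ). Then Smin ≤ λ·s + Umin ≤ Smax. -/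
/-- Single-step invariance, Case 1 (maximum discharge keeps the level in bounds). -/
theorem stmt_2 (lam W Smin Smax Umin Umax Dl Du Γ s : ℝ)
    (hlam0 : 0 < lam) (hlam1 : lam ≤ 1) (hW : 0 ≤ W) (hD : Dl ≤ Du)
    (hs1 : Smin ≤ s) (hs2 : s ≤ Smax)
    (hfeas : lam * Smax + Umin ≤ Smax)
    (hΓ : Γ ≤ (-W * Du - Smin + Umin) / lam)
    (hthr : -W * Dl ≤ lam * (s + Γ)) :
    Smin ≤ lam * s + Umin ∧ lam * s + Umin ≤ Smax := by
  have hΓ' : lam * Γ ≤ -W * Du - Smin + Umin := by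
    rw [mul_comm]
    exact (le_div_iff₀ hlam0).mp hΓ
  constructor
  · nlinarith [mul_nonneg hW (sub_nonneg.mpr hD)]
  · nlinarith [mul_le_mul_of_nonneg_left hs2 hlam0.le]
end

section
/- (Single-step invariance, Case 2.) Let λ ∈ (0,1], W ≥ 0, D̲ ≤ D̄, Smin ≤ s ≤ Smax, suppose λ·Smin + Umax ≥ Smin, Γ ≥ κmin where κmin := (−W·D̲ + Umax − Smax)/λ, and suppose λ·(s + Γ) ≤ −W·D̄. Then Smin ≤ λ·s + Umax ≤ Smax. -/
/-- Single-step invariance, Case 2 (maximum charge keeps the level in bounds). -/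
theorem stmt_3 (lam W Smin Smax Umin Umax Dl Du Γ s : ℝ)
    (hlam0 : 0 < lam) (hlam1 : lam ≤ 1) (hW : 0 ≤ W) (hD : Dl ≤ Du)
    (hs1 : Smin ≤ s) (hs2 : s ≤ Smax)
    (hfeas : lam * Smin + Umax ≥ Smin)
    (hΓ : (-W * Dl + Umax - Smax) / lam ≤ Γ)
    (hthr : lam * (s + Γ) ≤ -W * Du) :
    Smin ≤ lam * s + Umax ∧ lam * s + Umax ≤ Smax := by
  constructor
  · nlinarith [mul_le_mul_of_nonneg_left hs1 hlam0.le]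
  · have h1 : -W * Dl + Umax - Smax ≤ lam * Γ := by
      rw [div_le_iff₀ hlam0] at hΓ; linarith [hΓ]
    nlinarith [mul_nonneg hW (sub_nonneg.mpr hD)]
end

section
/- (Single-step invariance, Case 3.) Let λ > 0, and let Γ satisfy κmin ≤ Γ ≤ κmax, where κmin := (−W·D̲ + Umax − Smax)/λ and κmax := (−W·D̄ − Smin + Umin)/λ. Suppose −W·D̄ < λ·(s + Γ) < −W·D̲ and Umin ≤ u ≤ Umax. Then Smin < λ·s + u < Smax. -/
/-- Single-step invariance, Case 3 (intermediate regime; any admissible control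
    keeps the next storage level strictly within bounds). -/
theorem stmt_4 (lam W Smin Smax Umin Umax Dl Du Γ s u : ℝ)
    (hlam : 0 < lam)
    (hΓ1 : (-W * Dl + Umax - Smax) / lam ≤ Γ)
    (hΓ2 : Γ ≤ (-W * Du - Smin + Umin) / lam)
    (hthr1 : -W * Du < lam * (s + Γ)) (hthr2 : lam * (s + Γ) < -W * Dl)
    (hu1 : Umin ≤ u) (hu2 : u ≤ Umax) :
    Smin < lam * s + u ∧ lam * s + u < Smax := by
  rw [div_le_iff₀ hlam] at hΓ1
  rw [le_div_iff₀ hlam] at hΓ2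
  constructor <;> nlinarith
end

section
/- (Per-step drift bound M(Γ) for stationary policies.) Let λ ∈ (0,1], Smin ≤ Smax, Umin ≤ Umax and Γ be real numbers. Suppose Smin ≤ s ≤ Smax and u satisfies both Umin ≤ u ≤ Umax and (1−λ)·Smin ≤ u ≤ (1−λ)·Smax. Set b := s + Γ and b' := λ·b + u + (1−λ)·Γ. Then (1/2)·b'² − (1/2)·b² ≤ (1/2)·max((Umin + (1−λ)·Γ)², (Umax + (1−λ)·Γ)²) + λ·(1−λ)·max((Smin + Γ)², (Smax + Γ)²). -/
lemma sq_le_max_aux (a c x : ℝ) (h1 : a ≤ x) (h2 : x ≤ c) :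
    x ^ 2 ≤ max (a ^ 2) (c ^ 2) := by
  rcases le_total x 0 with hx | hx
  · exact le_max_of_le_left (by nlinarith)
  · exact le_max_of_le_right (by nlinarith)

lemma bv_le_aux (lam A C b v : ℝ) (hl1 : 0 ≤ 1 - lam)
    (hA : A ≤ b) (hC : b ≤ C)
    (hv1 : (1 - lam) * A ≤ v) (hv2 : v ≤ (1 - lam) * C) :
    b * v ≤ (1 - lam) * max (A ^ 2) (C ^ 2) := by
  rcases le_total 0 b with hbpos | hbneg
  · have hC0 : 0 ≤ C := le_trans hbpos hC
    have h1 : b * v ≤ b * ((1 - lam) * C) := mul_le_mul_of_nonneg_left hv2 hbpos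
    have h2 : 0 ≤ (1 - lam) * C * (C - b) := mul_nonneg (mul_nonneg hl1 hC0) (by linarith)
    have h3 : (1 - lam) * C ^ 2 ≤ (1 - lam) * max (A ^ 2) (C ^ 2) :=
      mul_le_mul_of_nonneg_left (le_max_right _ _) hl1
    nlinarith
  · have hA0 : A ≤ 0 := le_trans hA hbneg
    have h1 : (-b) * ((1 - lam) * A) ≤ (-b) * v :=
      mul_le_mul_of_nonneg_left hv1 (by linarith)
    have h2 : 0 ≤ (1 - lam) * (-A) * (b - A) :=
      mul_nonneg (mul_nonneg hl1 (by linarith)) (by linarith)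
    have h3 : (1 - lam) * A ^ 2 ≤ (1 - lam) * max (A ^ 2) (C ^ 2) :=
      mul_le_mul_of_nonneg_left (le_max_left _ _) hl1
    nlinarith

/-- Per-step drift bound `M(Γ)` for stationary policies. -/
theorem stmt_15 (lam Smin Smax Umin Umax Γ s u : ℝ)
    (hlam0 : 0 < lam) (hlam1 : lam ≤ 1)
    (hS : Smin ≤ Smax) (hU : Umin ≤ Umax)
    (hs1 : Smin ≤ s) (hs2 : s ≤ Smax)
    (hu1 : Umin ≤ u) (hu2 : u ≤ Umax)
    (hv1 : (1 - lam) * Smin ≤ u) (hv2 : u ≤ (1 - lam) * Smax) :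
    (1 / 2) * (lam * (s + Γ) + u + (1 - lam) * Γ) ^ 2 - (1 / 2) * (s + Γ) ^ 2 ≤
      (1 / 2) * max ((Umin + (1 - lam) * Γ) ^ 2) ((Umax + (1 - lam) * Γ) ^ 2) +
        lam * (1 - lam) * max ((Smin + Γ) ^ 2) ((Smax + Γ) ^ 2) := by
  have hl1 : (0:ℝ) ≤ 1 - lam := by linarith
  have hmU : (u + (1 - lam) * Γ) ^ 2 ≤
      max ((Umin + (1 - lam) * Γ) ^ 2) ((Umax + (1 - lam) * Γ) ^ 2) :=
    sq_le_max_aux _ _ _ (by linarith) (by linarith)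
  have hbv : (s + Γ) * (u + (1 - lam) * Γ) ≤
      (1 - lam) * max ((Smin + Γ) ^ 2) ((Smax + Γ) ^ 2) :=
    bv_le_aux lam (Smin + Γ) (Smax + Γ) (s + Γ) (u + (1 - lam) * Γ) hl1
      (by linarith) (by linarith) (by nlinarith) (by nlinarith)
  have h4 : lam * ((s + Γ) * (u + (1 - lam) * Γ)) ≤
      lam * ((1 - lam) * max ((Smin + Γ) ^ 2) ((Smax + Γ) ^ 2)) :=
    mul_le_mul_of_nonneg_left hbv hlam0.le
  have h5 : 0 ≤ (1 - lam ^ 2) * (s + Γ) ^ 2 :=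
    mul_nonneg (by nlinarith) (sq_nonneg _)
  nlinarith [h4, h5, hmU]
end

section
/- (Finite-time controllability of the storage.) Let λ ∈ (0,1] and real numbers Smin ≤ Smax, Umin ≤ Umax satisfy the strict controllability conditions λ·Smax + Umax > Smax and λ·Smin + Umin < Smin. Then for all s₀ and s' with Smin ≤ s₀ ≤ Smax and Smin ≤ s' ≤ Smax, there exist an integer N ≥ 0 and controls u(1), …, u(N) with Umin ≤ u(k) ≤ Umax such that the trajectory defined by s(0) = s₀ and s(k) = λ·s(k−1) + u(k) satisfies Smin ≤ s(k) ≤ Smax for all 0 ≤ k ≤ N and s(N) = s'. -/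
/-- Finite-time controllability of the storage. -/
theorem stmt_17 (lam Smin Smax Umin Umax : ℝ)
    (hlam0 : 0 < lam) (hlam1 : lam ≤ 1)
    (hS : Smin ≤ Smax) (hU : Umin ≤ Umax)
    (hctrl1 : lam * Smax + Umax > Smax) (hctrl2 : lam * Smin + Umin < Smin)
    (s₀ s' : ℝ) (h₀1 : Smin ≤ s₀) (h₀2 : s₀ ≤ Smax)
    (h'1 : Smin ≤ s') (h'2 : s' ≤ Smax) :
    ∃ (N : ℕ) (u : ℕ → ℝ) (s : ℕ → ℝ),
      s 0 = s₀ ∧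
      (∀ k, 1 ≤ k → k ≤ N → Umin ≤ u k ∧ u k ≤ Umax) ∧
      (∀ k, 1 ≤ k → k ≤ N → s k = lam * s (k - 1) + u k) ∧
      (∀ k, k ≤ N → Smin ≤ s k ∧ s k ≤ Smax) ∧
      s N = s' := by
  set ε : ℝ := min (lam * Smax + Umax - Smax) (Smin - (lam * Smin + Umin)) with hεdef
  have hε : 0 < ε := lt_min (by linarith) (by linarith)
  have hε1 : ε ≤ lam * Smax + Umax - Smax := min_le_left _ _
  have hε2 : ε ≤ Smin - (lam * Smin + Umin) := min_le_right _ _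
  set d : ℝ := s' - s₀ with hddef
  set c : ℕ → ℝ := fun k => max (-((k : ℝ) * ε)) (min ((k : ℝ) * ε) d) with hcdef
  -- bounds on c
  have hcb : ∀ k : ℕ, min d 0 ≤ c k ∧ c k ≤ max d 0 := by
    intro k
    have hk : (0 : ℝ) ≤ (k : ℝ) * ε := mul_nonneg (Nat.cast_nonneg k) hε.le
    simp only [hcdef, min_def, max_def]
    split_ifs <;> constructor <;> linarith
  -- step bound
  have hstep : ∀ k : ℕ, c k - ε ≤ c (k + 1) ∧ c (k + 1) ≤ c k + ε := by
    intro k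
    have hk : (0 : ℝ) ≤ (k : ℝ) * ε := mul_nonneg (Nat.cast_nonneg k) hε.le
    have hcast : ((k + 1 : ℕ) : ℝ) * ε = (k : ℝ) * ε + ε := by push_cast; ring
    simp only [hcdef, hcast, min_def, max_def]
    split_ifs <;> constructor <;> linarith
  have hc0 : c 0 = 0 := by
    simp only [hcdef, Nat.cast_zero, zero_mul, neg_zero]
    exact max_eq_left (min_le_left 0 d)
  set N : ℕ := ⌈|d| / ε⌉₊ with hNdef
  have hN : |d| ≤ (N : ℝ) * ε := by
    have h1 : |d| / ε ≤ (N : ℝ) := Nat.le_ceil _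
    calc |d| = |d| / ε * ε := by field_simp
    _ ≤ (N : ℝ) * ε := by nlinarith
  have hcN : c N = d := by
    have h1 : d ≤ (N : ℝ) * ε := le_trans (le_abs_self d) hN
    have h2 : -((N : ℝ) * ε) ≤ d := by
      have := neg_abs_le d; linarith [neg_le_neg hN]
    simp only [hcdef]
    rw [min_eq_right h1, max_eq_right h2]
  set s : ℕ → ℝ := fun k => s₀ + c k with hsdef
  have hsb : ∀ k : ℕ, Smin ≤ s k ∧ s k ≤ Smax := by
    intro k
    obtain ⟨hl, hr⟩ := hcb k
    have h1 : Smin - s₀ ≤ min d 0 := le_min (by simp [hddef]; linarith) (by linarith)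
    have h2 : max d 0 ≤ Smax - s₀ := max_le (by simp [hddef]; linarith) (by linarith)
    constructor <;> simp only [hsdef] <;> linarith
  refine ⟨N, fun k => s k - lam * s (k - 1), s, ?_, ?_, ?_, fun k _ => hsb k, ?_⟩
  · simp [hsdef, hc0]
  · intro k hk1 _
    obtain ⟨j, rfl⟩ := Nat.exists_eq_add_of_le hk1
    simp only []
    have hjk : 1 + j - 1 = j := by omega
    have hjs : 1 + j = j + 1 := by omega
    rw [hjk, hjs]
    obtain ⟨hst1, hst2⟩ := hstep j
    obtain ⟨hb1, hb2⟩ := hsb j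
    have hs1 : s j - ε ≤ s (j + 1) := by simp only [hsdef]; linarith
    have hs2 : s (j + 1) ≤ s j + ε := by simp only [hsdef]; linarith
    constructor
    · nlinarith [mul_nonneg (sub_nonneg.2 hlam1) (sub_nonneg.2 hb1)]
    · nlinarith [mul_nonneg (sub_nonneg.2 hlam1) (sub_nonneg.2 hb2)]
  · intro k _ _; ring
  · simp only [hsdef, hcN, hddef]; ring
end
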